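/- Let V be an n-dimensional vector space over a field 𝕜 with n ≥ 2, let B : V → V be an invertible linear map, let v : Fin k → V and p : Fin k → V*, and set B' = B + Σ_{i=1}^{k} v_i ⊗ p_i. Put u_i = B⁻¹v_i and A = id_V + Σ_{i=1}^{k} u_i ⊗ p_i. If det A ≠ 0, then B' is invertible, (B')⁻¹ = A⁻¹ ∘ B⁻¹, and for every x ∈ V and q ∈ V*: q((B')⁻¹x) · det A = q(B⁻¹x) + Σ over all nonempty subsets S ⊆ {1,…,k} with |S| ≤ min(n−1,k) of E(q, B⁻¹x; p, u, S). -/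

import Mathlib

open Module

/-- `E q x p u S` : the determinant of the `(|S|+1) × (|S|+1)` matrix whose first row is
`(q x, q (u j₁), …, q (u jᵢ))` and whose remaining rows are
`(p jₗ x, p jₗ (u j₁), …, p jₗ (u jᵢ))` for `S = {j₁ < … < jᵢ}`; it equals
`(q ∧ p j₁ ∧ … ∧ p jᵢ)(x, u j₁, …, u jᵢ)`. -/
noncomputable def detE {𝕜 V : Type*} [Field 𝕜] [AddCommGroup V] [Module 𝕜 V] {k : ℕ}
    (q : Dual 𝕜 V) (x : V) (p : Fin k → Dual 𝕜 V) (u : Fin k → V) (S : Finset (Fin k)) : 𝕜 :=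
  Matrix.det (Matrix.of fun i j : Option {a // a ∈ S} =>
    (i.elim q fun l => p l) (j.elim x fun l => u l))

open Module

lemma det_one_add_eq_sum_minors {𝕜 : Type*} [Field 𝕜] {ι : Type*} [Fintype ι] [DecidableEq ι]
    (M : Matrix ι ι 𝕜) :
    (1 + M).det = ∑ S : Finset ι, (Matrix.of fun i j : {a // a ∈ S} => M i.1 j.1).det := by
  classical
  have h1 : (1 + M : Matrix ι ι 𝕜) =
      Matrix.of ((fun i => (M i : ι → 𝕜)) + fun i => ((1 : Matrix ι ι 𝕜) i)) := by
    ext i j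
    simp [Matrix.add_apply, add_comm]
  rw [h1]
  have h2 : (Matrix.of ((fun i => (M i : ι → 𝕜)) + fun i => ((1 : Matrix ι ι 𝕜) i))).det
      = (Matrix.detRowAlternating :
          (ι → 𝕜) [⋀^ι]→ₗ[𝕜] 𝕜).toMultilinearMap
          ((fun i => (M i : ι → 𝕜)) + fun i => ((1 : Matrix ι ι 𝕜) i)) := rfl
  rw [h2, MultilinearMap.map_add_univ]
  refine Finset.sum_congr rfl fun s _ => ?_
  have h3 : ((Matrix.detRowAlternating : (ι → 𝕜) [⋀^ι]→ₗ[𝕜] 𝕜).toMultilinearMap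
        (s.piecewise (fun i => (M i : ι → 𝕜)) (fun i => ((1 : Matrix ι ι 𝕜) i))))
      = (Matrix.of (s.piecewise (fun i => (M i : ι → 𝕜)) (fun i => ((1 : Matrix ι ι 𝕜) i)))).det := rfl
  rw [h3]
  set N := Matrix.of (s.piecewise (fun i => (M i : ι → 𝕜)) (fun i => ((1 : Matrix ι ι 𝕜) i))) with hN
  have hz : ∀ i, ¬ (i ∈ s) → ∀ j, j ∈ s → N i j = 0 := by
    intro i hi j hj
    have h4 : N i = (1 : Matrix ι ι 𝕜) i := Finset.piecewise_eq_of_notMem _ _ _ hi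
    have hij : i ≠ j := fun h => hi (h ▸ hj)
    rw [hN]
    show s.piecewise (fun i => (M i : ι → 𝕜)) (fun i => ((1 : Matrix ι ι 𝕜) i)) i j = 0
    rw [Finset.piecewise_eq_of_notMem _ _ _ hi]
    exact Matrix.one_apply_ne hij
  rw [Matrix.twoBlockTriangular_det N (· ∈ s) hz]
  have hA : N.toSquareBlockProp (· ∈ s) = Matrix.of fun i j : {a // a ∈ s} => M i.1 j.1 := by
    ext i j
    show s.piecewise (fun i => (M i : ι → 𝕜)) (fun i => ((1 : Matrix ι ι 𝕜) i)) i.1 j.1 = M i.1 j.1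
    rw [Finset.piecewise_eq_of_mem _ _ _ i.2]
  have hB : N.toSquareBlockProp (fun i => ¬ (i ∈ s)) = 1 := by
    ext i j
    show s.piecewise (fun i => (M i : ι → 𝕜)) (fun i => ((1 : Matrix ι ι 𝕜) i)) i.1 j.1 = _
    rw [Finset.piecewise_eq_of_notMem _ _ _ i.2]
    simp [Matrix.one_apply, Subtype.ext_iff]
  rw [hA, hB, Matrix.det_one, mul_one]
  congr!

lemma det_dual_pairing_eq_zero {𝕜 V : Type*} [Field 𝕜] [AddCommGroup V] [Module 𝕜 V]
    [FiniteDimensional 𝕜 V] {ι : Type*} [Fintype ι] [DecidableEq ι]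
    (c : ι → Dual 𝕜 V) (w : ι → V) (h : finrank 𝕜 V < Fintype.card ι) :
    (Matrix.of fun i j : ι => c i (w j)).det = 0 := by
  rw [← Matrix.exists_vecMul_eq_zero_iff]
  have hni : ¬ LinearIndependent 𝕜 c := by
    intro hli
    have h2 := hli.fintype_card_le_finrank
    rw [Subspace.dual_finrank_eq] at h2
    omega
  obtain ⟨g, hg, i0, hi0⟩ := Fintype.not_linearIndependent_iff.mp hni
  refine ⟨g, ?_, ?_⟩
  · intro h0; exact hi0 (by rw [h0]; rfl)
  · funext j
    have h3 := DFunLike.congr_fun hg (w j)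
    simpa [Matrix.vecMul, dotProduct, Matrix.of_apply, LinearMap.sum_apply] using h3

lemma det_one_add_sum_smulRight {𝕜 V : Type*} [Field 𝕜] [AddCommGroup V] [Module 𝕜 V]
    [FiniteDimensional 𝕜 V] {ι : Type*} [Fintype ι] [DecidableEq ι]
    (p : ι → Dual 𝕜 V) (u : ι → V) :
    LinearMap.det ((1 : Module.End 𝕜 V) + ∑ i, (p i).smulRight (u i)) =
      ∑ S : Finset ι, (Matrix.of fun i j : {a // a ∈ S} => p i.1 (u j.1)).det := by
  classical
  set b := Module.finBasis 𝕜 V with hb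
  rw [← LinearMap.det_toMatrix b]
  set U : Matrix (Fin (finrank 𝕜 V)) ι 𝕜 := Matrix.of fun r i => b.repr (u i) r with hU
  set P : Matrix ι (Fin (finrank 𝕜 V)) 𝕜 := Matrix.of fun i r => p i (b r) with hP
  have hm : LinearMap.toMatrix b b ((1 : Module.End 𝕜 V) + ∑ i, (p i).smulRight (u i))
      = 1 + U * P := by
    rw [map_add, map_sum]
    congr 1
    · simp [Module.End.one_eq_id, LinearMap.toMatrix_id]
    · ext r s
      simp [LinearMap.toMatrix_apply, Matrix.mul_apply, Matrix.sum_apply, hU, hP, mul_comm,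
          Matrix.vecMulVec_apply]
  rw [hm, Matrix.det_one_add_mul_comm, det_one_add_eq_sum_minors]
  refine Finset.sum_congr rfl fun S _ => ?_
  congr 1
  ext i j
  show (P * U) i.1 j.1 = p i.1 (u j.1)
  rw [Matrix.mul_apply]
  conv_rhs => rw [← b.sum_repr (u j.1)]
  rw [map_sum]
  refine Finset.sum_congr rfl fun r _ => ?_
  rw [map_smul, smul_eq_mul, mul_comm]
  rfl

lemma det_one_add_smulRight {𝕜 V : Type*} [Field 𝕜] [AddCommGroup V] [Module 𝕜 V]
    [FiniteDimensional 𝕜 V] (q : Dual 𝕜 V) (z : V) :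
    LinearMap.det ((1 : Module.End 𝕜 V) + q.smulRight z) = 1 + q z := by
  classical
  have h := det_one_add_sum_smulRight (ι := Unit) (fun _ => q) (fun _ => z)
  rw [Fintype.sum_unique] at h
  rw [h]
  have huniv : (Finset.univ : Finset (Finset Unit)) = {∅, {()}} := by decide
  rw [huniv, Finset.sum_insert (by decide), Finset.sum_singleton]
  haveI : IsEmpty {a : Unit // a ∈ (∅ : Finset Unit)} :=
    ⟨fun a => absurd a.2 (Finset.notMem_empty _)⟩
  haveI : Unique {a : Unit // a ∈ ({()} : Finset Unit)} :=
    ⟨⟨⟨(), Finset.mem_singleton_self _⟩⟩, fun a => Subtype.ext rfl⟩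
  rw [Matrix.det_isEmpty, Matrix.det_unique]
  rfl


noncomputable def gramDet {𝕜 V : Type*} [Field 𝕜] [AddCommGroup V] [Module 𝕜 V]
    {ι : Type*} [DecidableEq ι] (c : ι → Dual 𝕜 V) (w : ι → V) (S : Finset ι) : 𝕜 :=
  (Matrix.of fun i j : {a // a ∈ S} => c i.1 (w j.1)).det

lemma det_one_add_sum_smulRight' {𝕜 V : Type*} [Field 𝕜] [AddCommGroup V] [Module 𝕜 V]
    [FiniteDimensional 𝕜 V] {ι : Type*} [Fintype ι] [DecidableEq ι]
    (p : ι → Dual 𝕜 V) (u : ι → V) :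
    LinearMap.det ((1 : Module.End 𝕜 V) + ∑ i, (p i).smulRight (u i)) =
      ∑ S : Finset ι, gramDet p u S :=
  det_one_add_sum_smulRight p u

def someSubtypeEquiv {α : Type*} (S : Finset α) :
    {a // a ∈ S} ≃ {b // b ∈ S.map Function.Embedding.some} where
  toFun a := ⟨some a.1, Finset.mem_map_of_mem _ a.2⟩
  invFun b :=
    match b with
    | ⟨some x, hx⟩ => ⟨x, by simpa using hx⟩
    | ⟨none, hx⟩ => absurd hx (by simp)
  left_inv a := rfl
  right_inv b := by
    rcases b with ⟨_ | x, hx⟩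
    · exact absurd hx (by simp)
    · rfl

def insertNoneSubtypeEquiv {α : Type*} (S : Finset α) :
    Option {a // a ∈ S} ≃ {b // b ∈ Finset.insertNone S} where
  toFun o :=
    match o with
    | none => ⟨none, Finset.none_mem_insertNone⟩
    | some a => ⟨some a.1, Finset.some_mem_insertNone.mpr a.2⟩
  invFun b :=
    match b with
    | ⟨none, _⟩ => none
    | ⟨some x, hx⟩ => some ⟨x, Finset.some_mem_insertNone.mp hx⟩
  left_inv o := by rcases o with _ | a <;> rfl
  right_inv b := by rcases b with ⟨_ | x, hx⟩ <;> rfl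

lemma gramDet_map_some {𝕜 V : Type*} [Field 𝕜] [AddCommGroup V] [Module 𝕜 V]
    {α : Type*} [DecidableEq α] (c : Option α → Dual 𝕜 V) (w : Option α → V) (S : Finset α) :
    gramDet c w (S.map Function.Embedding.some)
      = gramDet (fun a => c (some a)) (fun a => w (some a)) S := by
  unfold gramDet
  rw [← Matrix.det_submatrix_equiv_self (someSubtypeEquiv S)
      (Matrix.of fun i j : {b // b ∈ S.map Function.Embedding.some} => c i.1 (w j.1))]
  congr 1

lemma gramDet_insertNone {𝕜 V : Type*} [Field 𝕜] [AddCommGroup V] [Module 𝕜 V]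
    {α : Type*} [DecidableEq α] (c : Option α → Dual 𝕜 V) (w : Option α → V) (S : Finset α) :
    gramDet c w (Finset.insertNone S) =
      (Matrix.of fun i j : Option {a // a ∈ S} =>
        (i.elim (c none) fun l => c (some l.1)) (j.elim (w none) fun l => w (some l.1))).det := by
  unfold gramDet
  rw [← Matrix.det_submatrix_equiv_self (insertNoneSubtypeEquiv S)
      (Matrix.of fun i j : {b // b ∈ Finset.insertNone S} => c i.1 (w j.1))]
  congr 1
  ext i j
  rcases i with _ | a <;> rcases j with _ | a' <;> rfl

lemma sum_finset_option {β : Type*} [AddCommMonoid β] {α : Type*} [Fintype α] [DecidableEq α]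
    (f : Finset (Option α) → β) :
    ∑ T : Finset (Option α), f T =
      (∑ S : Finset α, f (S.map Function.Embedding.some)) +
        ∑ S : Finset α, f (Finset.insertNone S) := by
  classical
  rw [← Finset.sum_filter_add_sum_filter_not Finset.univ (fun T => none ∉ T)]
  congr 1
  · refine Finset.sum_bij' (fun T _ => Finset.eraseNone T)
      (fun S _ => S.map Function.Embedding.some)
      (fun T hT => Finset.mem_univ _) ?_ ?_ ?_ ?_
    · intro S _
      simp [Finset.mem_filter, Finset.mem_map]
    · intro T hT
      show Finset.map Function.Embedding.some (Finset.eraseNone T) = T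
      rw [Finset.map_some_eraseNone]
      exact Finset.erase_eq_of_notMem (by simpa using (Finset.mem_filter.mp hT).2)
    · intro S _
      exact Finset.eraseNone_map_some S
    · intro T hT
      show f T = f (Finset.map Function.Embedding.some (Finset.eraseNone T))
      rw [Finset.map_some_eraseNone,
        Finset.erase_eq_of_notMem (by simpa using (Finset.mem_filter.mp hT).2)]
  · refine Finset.sum_bij' (fun T _ => Finset.eraseNone T) (fun S _ => Finset.insertNone S)
      (fun T hT => Finset.mem_univ _) ?_ ?_ ?_ ?_
    · intro S _
      simp [Finset.mem_filter]
    · intro T hT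
      show Finset.insertNone (Finset.eraseNone T) = T
      rw [Finset.insertNone_eraseNone]
      exact Finset.insert_eq_self.mpr (by simpa using (Finset.mem_filter.mp hT).2)
    · intro S _
      exact Finset.eraseNone_insertNone S
    · intro T hT
      show f T = f (Finset.insertNone (Finset.eraseNone T))
      rw [Finset.insertNone_eraseNone,
        Finset.insert_eq_self.mpr (by simpa using (Finset.mem_filter.mp hT).2)]

/-- for invertible `B` and `B' = B + ∑ i, v i ⊗ p i`, with `u i = B⁻¹ (v i)`
and `A = id_V + ∑ i, u i ⊗ p i`, if `det A ≠ 0` then `B'` is invertible,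
`(B')⁻¹ = A⁻¹ ∘ B⁻¹`, and for all `x ∈ V`, `q ∈ V*` one has
`q ((B')⁻¹ x) * det A = q (B⁻¹ x) + ∑_{∅ ≠ S, |S| ≤ min (n-1) k} E(q, B⁻¹ x; p, u, S)`. -/
theorem inverse_of_perturbed_operator
    (𝕜 V : Type*) [Field 𝕜] [AddCommGroup V] [Module 𝕜 V] [FiniteDimensional 𝕜 V]
    {n k : ℕ} (hn : finrank 𝕜 V = n) (h2 : 2 ≤ n)
    (B : V ≃ₗ[𝕜] V) (v : Fin k → V) (p : Fin k → Dual 𝕜 V)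
    (u : Fin k → V) (hu : ∀ i, u i = B.symm (v i))
    (B' : Module.End 𝕜 V) (hB' : B' = (B : Module.End 𝕜 V) + ∑ i, (p i).smulRight (v i))
    (A : Module.End 𝕜 V) (hA : A = LinearMap.id + ∑ i, (p i).smulRight (u i))
    (hdet : LinearMap.det A ≠ 0) :
    IsUnit B' ∧
    Ring.inverse B' = Ring.inverse A * (B.symm : Module.End 𝕜 V) ∧
    ∀ (x : V) (q : Dual 𝕜 V),
      q (Ring.inverse B' x) * LinearMap.det A =
        q (B.symm x) + ∑ S ∈ Finset.univ.filter
            (fun S : Finset (Fin k) => S.Nonempty ∧ S.card ≤ min (n - 1) k),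
          detE q (B.symm x) p u S := by
  classical
  have hUA : IsUnit A := by
    have hcoe : ((A.equivOfDetNeZero hdet : V ≃ₗ[𝕜] V) : V →ₗ[𝕜] V) = A :=
      LinearEquiv.coe_ofIsUnitDet _
    rw [Module.End.isUnit_iff, ← hcoe]
    exact (A.equivOfDetNeZero hdet).bijective
  have hBA : B' = (B : Module.End 𝕜 V) * A := by
    ext w
    rw [hB', hA]
    simp [Module.End.mul_apply, LinearMap.add_apply, LinearMap.sum_apply,
      LinearMap.smulRight_apply, map_add, map_sum, map_smul, hu,
      LinearEquiv.apply_symm_apply, LinearMap.id_apply, LinearEquiv.coe_coe]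
  have hsymmB : (B.symm : Module.End 𝕜 V) * (B : Module.End 𝕜 V) = 1 := by
    ext w; simp
  have hBsymm : (B : Module.End 𝕜 V) * (B.symm : Module.End 𝕜 V) = 1 := by
    ext w; simp
  have hUB : IsUnit (B : Module.End 𝕜 V) :=
    ⟨⟨(B : Module.End 𝕜 V), (B.symm : Module.End 𝕜 V), hBsymm, hsymmB⟩, rfl⟩
  have hUB' : IsUnit B' := by rw [hBA]; exact hUB.mul hUA
  have hinv : Ring.inverse B' = Ring.inverse A * (B.symm : Module.End 𝕜 V) := by
    have h1 : (Ring.inverse A * (B.symm : Module.End 𝕜 V)) * B' = 1 := by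
      rw [hBA, mul_assoc, ← mul_assoc (B.symm : Module.End 𝕜 V), hsymmB, one_mul,
        Ring.inverse_mul_cancel _ hUA]
    exact (left_inv_eq_right_inv h1 (Ring.mul_inverse_cancel _ hUB')).symm
  refine ⟨hUB', hinv, ?_⟩
  intro x q
  set y := B.symm x with hy
  have hBx : Ring.inverse B' x = Ring.inverse A y := by
    rw [hinv]; rfl
  rw [hBx]
  set z := Ring.inverse A y with hz
  set p' : Option (Fin k) → Dual 𝕜 V := fun o => o.elim q p with hp'
  set u' : Option (Fin k) → V := fun o => o.elim y u with hu'
  have hAz : A z = y := by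
    have h3 := DFunLike.congr_fun (Ring.mul_inverse_cancel A hUA) y
    simpa [Module.End.mul_apply] using h3
  have hfact : A + q.smulRight y = A * ((1 : Module.End 𝕜 V) + q.smulRight z) := by
    rw [mul_add, mul_one]
    congr 1
    ext w
    simp [Module.End.mul_apply, ← hAz]
  have hdet1 : LinearMap.det (A + q.smulRight y) = LinearMap.det A * (1 + q z) := by
    rw [hfact, Module.End.mul_eq_comp, LinearMap.det_comp, det_one_add_smulRight]
  have hOpt : A + q.smulRight y
      = (1 : Module.End 𝕜 V) + ∑ o : Option (Fin k), (p' o).smulRight (u' o) := by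
    rw [Fintype.sum_option, hA]
    show _ = 1 + (q.smulRight y + ∑ i : Fin k, (p i).smulRight (u i))
    rw [Module.End.one_eq_id]
    abel
  have hsum1 : LinearMap.det A = ∑ S : Finset (Fin k), gramDet p u S := by
    rw [hA, ← Module.End.one_eq_id]
    exact det_one_add_sum_smulRight' p u
  have hsum2 : LinearMap.det (A + q.smulRight y)
      = ∑ T : Finset (Option (Fin k)), gramDet p' u' T := by
    rw [hOpt]
    exact det_one_add_sum_smulRight' p' u'
  have hsplit : ∑ T : Finset (Option (Fin k)), gramDet p' u' T
      = (∑ S : Finset (Fin k), gramDet p u S) + ∑ S : Finset (Fin k), detE q y p u S := by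
    rw [sum_finset_option (fun T => gramDet p' u' T)]
    congr 1
    · refine Finset.sum_congr rfl fun S _ => ?_
      rw [gramDet_map_some]
      rfl
    · refine Finset.sum_congr rfl fun S _ => ?_
      rw [gramDet_insertNone]
      rfl
  have key : q z * LinearMap.det A = ∑ S : Finset (Fin k), detE q y p u S := by
    have h5 := hsum2
    rw [hdet1, hsplit, ← hsum1] at h5
    have : LinearMap.det A * (1 + q z) - LinearMap.det A
        = q z * LinearMap.det A := by ring
    rw [← this, h5]
    ring
  rw [key]
  -- split off the empty set and drop the large sets
  have hempty : detE q y p u (∅ : Finset (Fin k)) = q y := by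
    haveI : Subsingleton (Option {a : Fin k // a ∈ (∅ : Finset (Fin k))}) :=
      ⟨by rintro (_ | ⟨a, ha⟩) (_ | ⟨b, hb⟩)
          · rfl
          · exact absurd hb (by simp)
          · exact absurd ha (by simp)
          · exact absurd ha (by simp)⟩
    rw [detE, Matrix.det_eq_elem_of_subsingleton _ none]
    rfl
  rw [← Finset.add_sum_erase Finset.univ _ (Finset.mem_univ (∅ : Finset (Fin k))), hempty]
  congr 1
  refine (Finset.sum_subset ?_ ?_).symm
  · intro S hS
    rw [Finset.mem_erase]
    exact ⟨Finset.nonempty_iff_ne_empty.mp (Finset.mem_filter.mp hS).2.1, Finset.mem_univ _⟩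
  · intro S hS hnS
    have hSne : S ≠ ∅ := (Finset.mem_erase.mp hS).1
    have hcard : ¬ (S.card ≤ min (n - 1) k) := by
      intro hc
      exact hnS (Finset.mem_filter.mpr ⟨Finset.mem_univ _,
        Finset.nonempty_iff_ne_empty.mpr hSne, hc⟩)
    have hSk : S.card ≤ k := by
      simpa using Finset.card_le_univ S
    have hbig : n ≤ S.card := by omega
    refine det_dual_pairing_eq_zero _ _ ?_
    rw [hn]
    have : Fintype.card (Option {a : Fin k // a ∈ S}) = S.card + 1 := by
      rw [Fintype.card_option, Fintype.card_coe]
    omega
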